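/- Let ψ₁,…,ψ_m be bounded measurable functions on [0,1] that are orthonormal in L²([0,1]), and let A < ∞ be a constant such that ‖v‖_∞ ≤ A‖v‖_{L²} for every v in the linear span of ψ₁,…,ψ_m. Let f be a measurable function on [0,1] with M₁⁻¹ ≤ f ≤ M₁ for a constant M₁ > 0, set g = log f, let g_V = Σᵢ₌₁^m ⟨g,ψ_i⟩ ψ_i be the L²-orthogonal projection of g onto the span (assumed essentially bounded away from g: set γ = ‖g − g_V‖_∞ and D = ‖g − g_V‖_{L²}). If ε := 2M₁² e^{2γ+1} D A ≤ 1, then there exists θ* ∈ ℝ^m such that ∫₀¹ f_{θ*} ψ_i dμ = ∫₀¹ f ψ_i dμ for all i = 1,…,m, and moreover Δ(f; f_{θ*}) ≤ (M₁/2) e^{γ} D². -/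

import Mathlib

/-!
The information projection is a minimiser of the convex objective
`θ ↦ ∫ f_θ - Σᵢ θᵢ ∫ f ψᵢ`, whose gradient is `(∫ f_θ ψᵢ - ∫ f ψᵢ)ᵢ`. Boundedness and
orthonormality of the `ψᵢ` give `‖θ‖ ≲ ‖Σ θᵢ ψᵢ‖_{L¹}`, and `f ≥ M₁⁻¹` then makes the objective
coercive, so a minimiser `θ*` exists and matches the moments of `f`.

Since `log f_{θ*} - log q` lies in the span for every `q = exp (Σ cᵢ ψᵢ)`, the moment equations
give the Pythagorean inequality `Δ(f; f_{θ*}) ≤ Δ(f; q)`. For `q = exp g_V` the integrand of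
`Δ(f; q)` is `f (r - 1 + e^{-r})` with `r = g - g_V`, which is at most `(M₁/2) e^γ r²`
because `|r| ≤ γ`.
-/

open MeasureTheory

/-- The generalized Kullback–Leibler divergence
`Δ(f;g) = ∫₀¹ (f log(f/g) − f + g) dμ`, `μ` the Lebesgue measure on `[0,1]`. -/
noncomputable def KLdiv (f g : ℝ → ℝ) : ℝ :=
  ∫ x in Set.Icc (0:ℝ) 1, (f x * Real.log (f x / g x) - f x + g x)

/-- The exponential family member `f_θ = exp(Σ_{i} θ_i ψ_i)`. -/
noncomputable def expFam {m : ℕ} (ψ : Fin m → ℝ → ℝ) (θ : Fin m → ℝ) : ℝ → ℝ :=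
  fun x => Real.exp (∑ i, θ i * ψ i x)

/-- Supremum norm of a function over `[0,1]`. -/
noncomputable def supIcc (h : ℝ → ℝ) : ℝ := ⨆ x : Set.Icc (0:ℝ) 1, |h x|

/-- The residual `g − g_V` of the `L²`-orthogonal projection of `g = log f` onto
the span of the orthonormal family `ψ`, i.e. `g − Σᵢ ⟨g,ψᵢ⟩ ψᵢ`. -/
noncomputable def projResidual {m : ℕ} (ψ : Fin m → ℝ → ℝ) (f : ℝ → ℝ) : ℝ → ℝ :=
  fun x => Real.log (f x)
    - ∑ i, (∫ t in Set.Icc (0:ℝ) 1, Real.log (f t) * ψ i t) * ψ i x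

open Filter Real
open scoped ENNReal

lemma exp_le_one_add_add_sq_div_two {s : ℝ} (hs : s ≤ 0) : exp s ≤ 1 + s + s ^ 2 / 2 := by
  have hderiv (t : ℝ) : HasDerivAt (fun t => 1 + t + t ^ 2 / 2 - exp t) (1 + t - exp t) t := by
    refine ((((hasDerivAt_id' t).const_add 1).add ((hasDerivAt_pow 2 t).div_const 2)).sub
      (hasDerivAt_exp t)).congr_deriv ?_
    push_cast; ring
  have := antitone_of_deriv_nonpos (fun t => (hderiv t).differentiableAt)
    (fun t => by rw [(hderiv t).deriv]; linarith [add_one_le_exp t]) hs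
  simp only [exp_zero] at this
  linarith

lemma exp_sub_one_sub_le_sq_div_two_mul_exp {s : ℝ} (hs : 0 ≤ s) :
    exp s - 1 - s ≤ s ^ 2 / 2 * exp s := by
  have hderiv (t : ℝ) : HasDerivAt (fun t => t ^ 2 / 2 * exp t - exp t + 1 + t)
      (t * exp t + t ^ 2 / 2 * exp t - exp t + 1) t := by
    refine (((((hasDerivAt_pow 2 t).div_const 2).mul (hasDerivAt_exp t)).sub
      (hasDerivAt_exp t)).add_const 1 |>.add (hasDerivAt_id' t)).congr_deriv ?_
    push_cast; ring
  have hderiv_nonneg (t : ℝ) : 0 ≤ t * exp t + t ^ 2 / 2 * exp t - exp t + 1 := by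
    -- multiplied by `exp (-t)` this is `t + t ^ 2 / 2 - 1 + exp (-t) ≥ t ^ 2 / 2`
    have h := mul_le_mul_of_nonneg_left (add_one_le_exp (-t)) (exp_pos t).le
    rw [← exp_add, add_neg_cancel, exp_zero] at h
    nlinarith [sq_nonneg t, exp_pos t]
  have := monotone_of_deriv_nonneg (fun t => (hderiv t).differentiableAt)
    (fun t => (hderiv t).deriv ▸ hderiv_nonneg t) hs
  simp only [exp_zero] at this
  linarith

lemma exp_sub_one_sub_le_of_abs_le {s γ : ℝ} (h : |s| ≤ γ) :
    exp s - 1 - s ≤ s ^ 2 / 2 * exp γ := by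
  rcases le_total s 0 with hs | hs
  · have := exp_le_one_add_add_sq_div_two hs
    have : 1 ≤ exp γ := one_le_exp ((abs_nonneg s).trans h)
    nlinarith [sq_nonneg s]
  · have := exp_sub_one_sub_le_sq_div_two_mul_exp hs
    have : exp s ≤ exp γ := exp_le_exp.2 ((le_abs_self s).trans h)
    nlinarith [sq_nonneg s]

noncomputable def klIntegrand (a b : ℝ) : ℝ := a * log (a / b) - a + b

lemma klIntegrand_exp {a : ℝ} (ha : 0 < a) (v : ℝ) :
    klIntegrand a (exp v) = a * (log a - v) - a + exp v := by
  rw [klIntegrand, log_div ha.ne' (exp_pos v).ne', log_exp]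

lemma klIntegrand_exp_nonneg {a : ℝ} (ha : 0 < a) (v : ℝ) : 0 ≤ klIntegrand a (exp v) := by
  have h := mul_le_mul_of_nonneg_left (add_one_le_exp (v - log a)) ha.le
  rw [exp_sub, exp_log ha, mul_div_cancel₀ _ ha.ne'] at h
  rw [klIntegrand_exp ha]
  linarith

lemma klIntegrand_exp_le {a M w γ : ℝ} (ha : 0 < a) (haM : a ≤ M) (h : |log a - w| ≤ γ) :
    klIntegrand a (exp w) ≤ M / 2 * exp γ * (log a - w) ^ 2 := by
  set r := log a - w
  have hexp : exp w = a * exp (-r) := by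
    rw [exp_neg, ← div_eq_mul_inv, eq_div_iff (exp_pos r).ne', ← exp_add,
      show w + r = log a by ring, exp_log ha]
  have htaylor := exp_sub_one_sub_le_of_abs_le (s := -r) (γ := γ) (by rwa [abs_neg])
  have hnonneg : 0 ≤ exp (-r) - 1 + r := by linarith [add_one_le_exp (-r)]
  calc klIntegrand a (exp w) = a * (exp (-r) - 1 + r) := by rw [klIntegrand_exp ha, hexp]; ring
    _ ≤ M * (r ^ 2 / 2 * exp γ) := by
        refine mul_le_mul haM ?_ hnonneg (ha.le.trans haM)
        rw [neg_sq] at htaylor; linarith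
    _ = M / 2 * exp γ * r ^ 2 := by ring

lemma klIntegrand_exp_le_add {a : ℝ} (ha : 0 < a) (v w : ℝ) :
    klIntegrand a (exp v) ≤ klIntegrand a (exp w) + (exp v - a) * (v - w) := by
  have h := mul_le_mul_of_nonneg_left (add_one_le_exp (w - v)) (exp_pos v).le
  rw [← exp_add, add_sub_cancel] at h
  rw [klIntegrand_exp ha, klIntegrand_exp ha]
  nlinarith

lemma inv_mul_abs_sub_le_exp_sub_mul {M t v : ℝ} (ht : M⁻¹ ≤ t ∧ t ≤ M) :
    M⁻¹ * |v| - (M + M⁻¹) ^ 2 / 2 ≤ exp v - t * v := by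
  rcases le_total v 0 with hv | hv
  · rw [abs_of_nonpos hv]
    nlinarith [exp_pos v, mul_le_mul_of_nonneg_right ht.1 (neg_nonneg.2 hv)]
  · rw [abs_of_nonneg hv]
    nlinarith [quadratic_le_exp_of_nonneg hv, mul_le_mul_of_nonneg_right ht.2 hv,
      sq_nonneg (v - (M + M⁻¹))]

lemma sq_norm_le_sum_sq {ι : Type*} [Fintype ι] (θ : ι → ℝ) : ‖θ‖ ^ 2 ≤ ∑ i, θ i ^ 2 := by
  have hsum : 0 ≤ ∑ i, θ i ^ 2 := Finset.sum_nonneg fun i _ => sq_nonneg (θ i)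
  have : ‖θ‖ ≤ √(∑ i, θ i ^ 2) := (pi_norm_le_iff_of_nonneg (sqrt_nonneg _)).2 fun i => by
    rw [norm_eq_abs]
    exact abs_le_sqrt (Finset.single_le_sum (fun j _ => sq_nonneg (θ j)) (Finset.mem_univ i))
  calc ‖θ‖ ^ 2 ≤ √(∑ i, θ i ^ 2) ^ 2 := pow_le_pow_left₀ (norm_nonneg _) this 2
    _ = ∑ i, θ i ^ 2 := sq_sqrt hsum

lemma hasFDerivAt_sum_mul {ι : Type*} [Fintype ι] (y θ : ι → ℝ) :
    HasFDerivAt (fun θ : ι → ℝ => ∑ i, θ i * y i)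
      (∑ i, y i • ContinuousLinearMap.proj (R := ℝ) (φ := fun _ : ι => ℝ) i) θ :=
  HasFDerivAt.fun_sum fun i _ => (hasFDerivAt_apply i θ).mul_const (y i)

section BoundedFunctions

variable {α ι : Type*} [MeasurableSpace α] {μ : Measure α} [Fintype ι] {ψ : ι → α → ℝ}

lemma abs_sum_mul_le {θ y C : ι → ℝ} (hy : ∀ i, |y i| ≤ C i) :
    |∑ i, θ i * y i| ≤ ‖θ‖ * ∑ i, C i := by
  rw [Finset.mul_sum]
  refine (Finset.abs_sum_le_sum_abs _ _).trans (Finset.sum_le_sum fun i _ => ?_)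
  rw [abs_mul, ← Real.norm_eq_abs]
  exact mul_le_mul (norm_le_pi_norm θ i) (hy i) (abs_nonneg _) (norm_nonneg _)

lemma ae_forall_abs_le_lpNorm (hψ : ∀ i, MemLp (ψ i) ∞ μ) :
    ∀ᵐ x ∂μ, ∀ i, |ψ i x| ≤ lpNorm (ψ i) ∞ μ :=
  ae_all_iff.2 fun i => by simpa using ae_le_lpNorm_exponent_top (hψ i)

lemma memLp_top_sum_mul (hψ : ∀ i, MemLp (ψ i) ∞ μ) (θ : ι → ℝ) :
    MemLp (fun x => ∑ i, θ i * ψ i x) ∞ μ :=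
  memLp_finsetSum _ fun i _ => (hψ i).const_mul (θ i)

lemma memLp_top_exp {v : α → ℝ} (hv : MemLp v ∞ μ) : MemLp (fun x => exp (v x)) ∞ μ := by
  refine memLp_top_of_bound (continuous_exp.comp_aestronglyMeasurable hv.1)
    (exp (lpNorm v ∞ μ)) ?_
  filter_upwards [ae_le_lpNorm_exponent_top hv] with x hx
  rw [norm_eq_abs, abs_exp]
  exact exp_le_exp.2 ((le_abs_self _).trans hx)

variable {f : α → ℝ} {M : ℝ}

lemma memLp_top_of_inv_le_of_le (hf : AEStronglyMeasurable f μ) (hM : 0 < M)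
    (hfb : ∀ᵐ x ∂μ, M⁻¹ ≤ f x ∧ f x ≤ M) : MemLp f ∞ μ := by
  refine memLp_top_of_bound hf M ?_
  filter_upwards [hfb] with x hx
  rw [norm_eq_abs, abs_of_pos ((inv_pos.2 hM).trans_le hx.1)]
  exact hx.2

lemma memLp_top_log_of_inv_le_of_le (hf : AEStronglyMeasurable f μ) (hM : 0 < M)
    (hfb : ∀ᵐ x ∂μ, M⁻¹ ≤ f x ∧ f x ≤ M) : MemLp (fun x => log (f x)) ∞ μ := by
  refine memLp_top_of_bound hf.aemeasurable.log.aestronglyMeasurable (log M) ?_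
  filter_upwards [hfb] with x hx
  have hfx : 0 < f x := (inv_pos.2 hM).trans_le hx.1
  rw [norm_eq_abs, abs_le]
  constructor
  · rw [← log_inv]; exact log_le_log (inv_pos.2 hM) hx.1
  · exact log_le_log hfx hx.2

lemma integral_mul_sum_mul {g : α → ℝ} (hg : ∀ i, Integrable (fun x => g x * ψ i x) μ)
    (θ : ι → ℝ) : ∫ x, g x * ∑ i, θ i * ψ i x ∂μ = ∑ i, θ i * ∫ x, g x * ψ i x ∂μ := by
  simp_rw [Finset.mul_sum, mul_left_comm (g _)]
  rw [integral_finsetSum _ fun i _ => (hg i).const_mul (θ i)]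
  simp_rw [integral_const_mul]

variable [IsFiniteMeasure μ]

lemma integral_sum_mul_sq [DecidableEq ι] (hψ : ∀ i, MemLp (ψ i) ∞ μ)
    (horth : ∀ i j, ∫ x, ψ i x * ψ j x ∂μ = if i = j then 1 else 0) (θ : ι → ℝ) :
    ∫ x, (∑ i, θ i * ψ i x) ^ 2 ∂μ = ∑ i, θ i ^ 2 := by
  have hu := memLp_top_sum_mul hψ θ
  simp_rw [sq, integral_mul_sum_mul (fun i => ((hψ i).mul' hu).integrable le_top)]
  refine Finset.sum_congr rfl fun j _ => ?_
  simp_rw [mul_comm _ (ψ j _), integral_mul_sum_mul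
    (fun i => ((hψ i).mul' (hψ j)).integrable le_top), horth]
  simp

end BoundedFunctions

section Objective

variable {α ι : Type*} [MeasurableSpace α] {μ : Measure α} [IsFiniteMeasure μ] [Fintype ι]
  {ψ : ι → α → ℝ}

lemma exists_pos_mul_norm_le_integral_abs_sum_mul [DecidableEq ι] (hψ : ∀ i, MemLp (ψ i) ∞ μ)
    (horth : ∀ i j, ∫ x, ψ i x * ψ j x ∂μ = if i = j then 1 else 0) :
    ∃ c > 0, ∀ θ : ι → ℝ, c * ‖θ‖ ≤ ∫ x, |∑ i, θ i * ψ i x| ∂μ := by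
  set B := ∑ i, lpNorm (ψ i) ∞ μ
  have hB : 0 ≤ B := Finset.sum_nonneg fun i _ => lpNorm_nonneg
  refine ⟨(B + 1)⁻¹, by positivity, fun θ => ?_⟩
  set u := fun x => ∑ i, θ i * ψ i x
  have hu : MemLp u ∞ μ := memLp_top_sum_mul hψ θ
  have hI : 0 ≤ ∫ x, |u x| ∂μ := integral_nonneg fun x => abs_nonneg _
  -- `‖u‖₂² ≤ ‖u‖_∞ ‖u‖₁`, and `‖u‖₂ = ‖θ‖₂ ≥ ‖θ‖` by orthonormality
  have hsq : ‖θ‖ ^ 2 ≤ ‖θ‖ * (B * ∫ x, |u x| ∂μ) := calc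
    ‖θ‖ ^ 2 ≤ ∑ i, θ i ^ 2 := sq_norm_le_sum_sq θ
    _ = ∫ x, u x ^ 2 ∂μ := (integral_sum_mul_sq hψ horth θ).symm
    _ ≤ ∫ x, ‖θ‖ * B * |u x| ∂μ := by
        refine integral_mono_ae (by simpa only [sq] using (hu.mul' hu).integrable le_top)
          ((hu.integrable le_top).abs.const_mul _) ?_
        filter_upwards [ae_forall_abs_le_lpNorm hψ] with x hx
        rw [sq, ← abs_mul_abs_self]
        exact mul_le_mul_of_nonneg_right (abs_sum_mul_le hx) (abs_nonneg _)
    _ = ‖θ‖ * (B * ∫ x, |u x| ∂μ) := by rw [integral_const_mul, mul_assoc]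
  have hθ : ‖θ‖ ≤ B * ∫ x, |u x| ∂μ := by
    rcases (norm_nonneg θ).eq_or_lt with h0 | hpos
    · rw [← h0]; positivity
    · exact le_of_mul_le_mul_left (by rwa [← sq]) hpos
  rw [inv_mul_le_iff₀ (by positivity)]
  nlinarith

noncomputable def expFamObjective (μ : Measure α) (ψ : ι → α → ℝ) (a θ : ι → ℝ) : ℝ :=
  ∫ x, exp (∑ i, θ i * ψ i x) ∂μ - ∑ i, θ i * a i

variable {f : α → ℝ} {M : ℝ}

lemma inv_mul_integral_abs_sub_le_expFamObjective (hψ : ∀ i, MemLp (ψ i) ∞ μ)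
    (hf : AEStronglyMeasurable f μ) (hM : 0 < M) (hfb : ∀ᵐ x ∂μ, M⁻¹ ≤ f x ∧ f x ≤ M)
    (θ : ι → ℝ) :
    M⁻¹ * ∫ x, |∑ i, θ i * ψ i x| ∂μ - (M + M⁻¹) ^ 2 / 2 * μ.real Set.univ ≤
      expFamObjective μ ψ (fun i => ∫ x, f x * ψ i x ∂μ) θ := by
  have hf' := memLp_top_of_inv_le_of_le hf hM hfb
  have hu := memLp_top_sum_mul hψ θ
  calc M⁻¹ * ∫ x, |∑ i, θ i * ψ i x| ∂μ - (M + M⁻¹) ^ 2 / 2 * μ.real Set.univ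
      = ∫ x, (M⁻¹ * |∑ i, θ i * ψ i x| - (M + M⁻¹) ^ 2 / 2) ∂μ := by
        rw [integral_sub ((hu.integrable le_top).abs.const_mul _) (integrable_const _),
          integral_const_mul, integral_const, smul_eq_mul, mul_comm (μ.real _)]
    _ ≤ ∫ x, (exp (∑ i, θ i * ψ i x) - f x * ∑ i, θ i * ψ i x) ∂μ := by
        refine integral_mono_ae (((hu.integrable le_top).abs.const_mul _).sub (integrable_const _))
          (((memLp_top_exp hu).integrable le_top).sub ((hu.mul' hf').integrable le_top)) ?_
        filter_upwards [hfb] with x hx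
        exact inv_mul_abs_sub_le_exp_sub_mul hx
    _ = expFamObjective μ ψ (fun i => ∫ x, f x * ψ i x ∂μ) θ := by
        rw [integral_sub ((memLp_top_exp hu).integrable le_top) ((hu.mul' hf').integrable le_top),
          integral_mul_sum_mul fun i => ((hψ i).mul' hf').integrable le_top]
        rfl

theorem tendsto_expFamObjective_cocompact [DecidableEq ι] (hψ : ∀ i, MemLp (ψ i) ∞ μ)
    (horth : ∀ i j, ∫ x, ψ i x * ψ j x ∂μ = if i = j then 1 else 0)
    (hf : AEStronglyMeasurable f μ) (hM : 0 < M) (hfb : ∀ᵐ x ∂μ, M⁻¹ ≤ f x ∧ f x ≤ M) :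
    Tendsto (expFamObjective μ ψ fun i => ∫ x, f x * ψ i x ∂μ) (cocompact (ι → ℝ)) atTop := by
  obtain ⟨c, hc, hcθ⟩ := exists_pos_mul_norm_le_integral_abs_sum_mul hψ horth
  refine tendsto_atTop_mono (fun θ => ?_) (tendsto_atTop_add_const_right _
    (-((M + M⁻¹) ^ 2 / 2 * μ.real Set.univ))
    ((tendsto_norm_cocompact_atTop.const_mul_atTop hc).const_mul_atTop (inv_pos.2 hM)))
  have := inv_mul_integral_abs_sub_le_expFamObjective hψ hf hM hfb θ
  have := mul_le_mul_of_nonneg_left (hcθ θ) (inv_nonneg.2 hM.le)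
  linarith

end Objective

section Stationarity

variable {α ι : Type*} [MeasurableSpace α] {μ : Measure α} [IsFiniteMeasure μ] [Fintype ι]
  {ψ : ι → α → ℝ}

lemma hasFDerivAt_integral_exp_sum_mul (hψ : ∀ i, MemLp (ψ i) ∞ μ) (θ₀ : ι → ℝ) :
    HasFDerivAt (fun θ => ∫ x, exp (∑ i, θ i * ψ i x) ∂μ)
      (∑ i, (∫ x, exp (∑ j, θ₀ j * ψ j x) * ψ i x ∂μ) •
        ContinuousLinearMap.proj (R := ℝ) (φ := fun _ : ι => ℝ) i) θ₀ := by
  set B := ∑ i, lpNorm (ψ i) ∞ μ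
  set L : α → (ι → ℝ) →L[ℝ] ℝ :=
    fun x => ∑ i, ψ i x • ContinuousLinearMap.proj (R := ℝ) (φ := fun _ : ι => ℝ) i
  have hexp (θ : ι → ℝ) := memLp_top_exp (memLp_top_sum_mul hψ θ)
  have hbound : ∀ᵐ x ∂μ, ∀ θ ∈ Metric.ball θ₀ 1,
      ‖exp (∑ i, θ i * ψ i x) • L x‖ ≤ exp ((‖θ₀‖ + 1) * B) * B := by
    filter_upwards [ae_forall_abs_le_lpNorm hψ] with x hx θ hθball
    have hθ : ‖θ‖ ≤ ‖θ₀‖ + 1 :=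
      (norm_le_norm_add_norm_sub' θ θ₀).trans (by linarith [mem_ball_iff_norm.1 hθball])
    have hB : 0 ≤ B := Finset.sum_nonneg fun i _ => lpNorm_nonneg
    have hLx : ‖L x‖ ≤ B := ContinuousLinearMap.opNorm_le_bound _ hB fun η => by
      have hLη : L x η = ∑ i, η i * ψ i x := by
        simp only [L, FunLike.coe_sum, Finset.sum_apply,
          FunLike.coe_smul, Pi.smul_apply, ContinuousLinearMap.proj_apply,
          smul_eq_mul, mul_comm]
      rw [hLη, norm_eq_abs, mul_comm]
      exact abs_sum_mul_le hx
    rw [norm_smul, norm_eq_abs, abs_exp]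
    refine mul_le_mul (exp_le_exp.2 ((le_abs_self _).trans ((abs_sum_mul_le hx).trans ?_))) hLx
      (norm_nonneg _) (exp_pos _).le
    exact mul_le_mul_of_nonneg_right hθ hB
  have key := hasFDerivAt_integral_of_dominated_of_fderiv_le (𝕜 := ℝ) (μ := μ) (x₀ := θ₀)
    (bound := fun _ => exp ((‖θ₀‖ + 1) * B) * B) (F := fun θ x => exp (∑ i, θ i * ψ i x))
    (F' := fun θ x => exp (∑ i, θ i * ψ i x) • L x)
    (Metric.ball_mem_nhds θ₀ one_pos) (Eventually.of_forall fun θ => (hexp θ).1)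
    ((hexp θ₀).integrable le_top)
    ((hexp θ₀).1.smul (Finset.aestronglyMeasurable_fun_sum _ fun i _ => (hψ i).1.smul_const _))
    hbound (integrable_const _)
    (Eventually.of_forall fun x θ _ => (hasFDerivAt_sum_mul (ψ · x) θ).exp)
  refine key.congr_fderiv ?_
  simp_rw [L, Finset.smul_sum, smul_smul]
  rw [integral_finsetSum _ fun i _ => (((hψ i).mul' (hexp θ₀)).integrable le_top).smul_const _]
  simp_rw [integral_smul_const]

lemma hasFDerivAt_expFamObjective (hψ : ∀ i, MemLp (ψ i) ∞ μ) (a θ₀ : ι → ℝ) :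
    HasFDerivAt (expFamObjective μ ψ a)
      (∑ i, (∫ x, exp (∑ j, θ₀ j * ψ j x) * ψ i x ∂μ - a i) •
        ContinuousLinearMap.proj (R := ℝ) (φ := fun _ : ι => ℝ) i) θ₀ := by
  refine ((hasFDerivAt_integral_exp_sum_mul hψ θ₀).sub (hasFDerivAt_sum_mul a θ₀)).congr_fderiv ?_
  rw [← Finset.sum_sub_distrib]
  exact Finset.sum_congr rfl fun i _ => (sub_smul _ _ _).symm

theorem integral_exp_sum_mul_mul_eq_of_forall_le (hψ : ∀ i, MemLp (ψ i) ∞ μ) {a θ : ι → ℝ}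
    (hmin : ∀ θ', expFamObjective μ ψ a θ ≤ expFamObjective μ ψ a θ') (i : ι) :
    ∫ x, exp (∑ j, θ j * ψ j x) * ψ i x ∂μ = a i := by
  classical
  have h := congrArg (· (Pi.single i 1)) (IsLocalMin.hasFDerivAt_eq_zero
    (Eventually.of_forall hmin) (hasFDerivAt_expFamObjective hψ a θ))
  simpa [Pi.single_apply, sub_eq_zero] using h

end Stationarity

section KullbackLeibler

variable {α : Type*} [MeasurableSpace α] {μ : Measure α} [IsFiniteMeasure μ] {f v w : α → ℝ}
  {M γ : ℝ}

theorem integral_klIntegrand_exp_le_of_integral_mul_eq_zero (hf : AEStronglyMeasurable f μ)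
    (hM : 0 < M) (hfb : ∀ᵐ x ∂μ, M⁻¹ ≤ f x ∧ f x ≤ M) (hv : MemLp v ∞ μ) (hw : MemLp w ∞ μ)
    (hcross : ∫ x, (exp (v x) - f x) * (v x - w x) ∂μ = 0) :
    ∫ x, klIntegrand (f x) (exp (v x)) ∂μ ≤ ∫ x, klIntegrand (f x) (exp (w x)) ∂μ := by
  have hf' := memLp_top_of_inv_le_of_le hf hM hfb
  have hpos : ∀ᵐ x ∂μ, 0 < f x := hfb.mono fun x hx => (inv_pos.2 hM).trans_le hx.1
  have hkl : Integrable (fun x => klIntegrand (f x) (exp (w x))) μ := by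
    refine (((((memLp_top_log_of_inv_le_of_le hf hM hfb).sub hw).mul' hf').sub hf').add
      (memLp_top_exp hw)).integrable le_top |>.congr ?_
    filter_upwards [hpos] with x hx using (klIntegrand_exp hx _).symm
  have hcross_int : Integrable (fun x => (exp (v x) - f x) * (v x - w x)) μ :=
    ((hv.sub hw).mul' ((memLp_top_exp hv).sub hf')).integrable le_top
  calc ∫ x, klIntegrand (f x) (exp (v x)) ∂μ
      ≤ ∫ x, (klIntegrand (f x) (exp (w x)) + (exp (v x) - f x) * (v x - w x)) ∂μ :=
        integral_mono_of_nonneg (hpos.mono fun x hx => klIntegrand_exp_nonneg hx _)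
          (hkl.add hcross_int) (hpos.mono fun x hx => klIntegrand_exp_le_add hx _ _)
    _ = ∫ x, klIntegrand (f x) (exp (w x)) ∂μ := by
        rw [integral_add hkl hcross_int, hcross, add_zero]

theorem integral_klIntegrand_exp_le (hf : AEMeasurable f μ) (hw : AEMeasurable w μ)
    (hfb : ∀ᵐ x ∂μ, 0 < f x ∧ f x ≤ M) (hγ : ∀ᵐ x ∂μ, |log (f x) - w x| ≤ γ) :
    ∫ x, klIntegrand (f x) (exp (w x)) ∂μ ≤ M / 2 * exp γ * ∫ x, (log (f x) - w x) ^ 2 ∂μ := by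
  have hr : MemLp (fun x => log (f x) - w x) ∞ μ :=
    memLp_top_of_bound (hf.log.sub hw).aestronglyMeasurable γ hγ
  rw [← integral_const_mul]
  refine integral_mono_of_nonneg (hfb.mono fun x hx => klIntegrand_exp_nonneg hx.1 _)
    (by simpa only [sq] using ((hr.mul' hr).integrable le_top).const_mul (M / 2 * exp γ)) ?_
  filter_upwards [hfb, hγ] with x hx hxγ using klIntegrand_exp_le hx.1 hx.2 hxγ

variable {ι : Type*} [Fintype ι] {ψ : ι → α → ℝ}

theorem integral_klIntegrand_le_of_moments_eq (hψ : ∀ i, MemLp (ψ i) ∞ μ)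
    (hf : AEStronglyMeasurable f μ) (hM : 0 < M) (hfb : ∀ᵐ x ∂μ, M⁻¹ ≤ f x ∧ f x ≤ M)
    {θ : ι → ℝ} (hmom : ∀ i, ∫ x, exp (∑ j, θ j * ψ j x) * ψ i x ∂μ = ∫ x, f x * ψ i x ∂μ)
    (c : ι → ℝ) :
    ∫ x, klIntegrand (f x) (exp (∑ i, θ i * ψ i x)) ∂μ ≤
      ∫ x, klIntegrand (f x) (exp (∑ i, c i * ψ i x)) ∂μ := by
  have hf' := memLp_top_of_inv_le_of_le hf hM hfb
  have hp := memLp_top_exp (memLp_top_sum_mul hψ θ)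
  refine integral_klIntegrand_exp_le_of_integral_mul_eq_zero hf hM hfb
    (memLp_top_sum_mul hψ θ) (memLp_top_sum_mul hψ c) ?_
  simp_rw [← Finset.sum_sub_distrib, ← sub_mul]
  rw [integral_mul_sum_mul (g := fun x => exp (∑ j, θ j * ψ j x) - f x)
    fun i => ((hψ i).mul' (hp.sub hf')).integrable le_top]
  refine Finset.sum_eq_zero fun i _ => mul_eq_zero_of_right _ ?_
  simp_rw [sub_mul]
  rw [integral_sub (((hψ i).mul' hp).integrable le_top) (((hψ i).mul' hf').integrable le_top),
    hmom i, sub_self]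

end KullbackLeibler

theorem stmt_14_general {m : ℕ} (ψ : Fin m → ℝ → ℝ)
    (hψmeas : ∀ i, Measurable (ψ i)) (hψbdd : ∀ i, ∃ C, ∀ x, |ψ i x| ≤ C)
    (horth : ∀ i j, (∫ x in Set.Icc (0:ℝ) 1, ψ i x * ψ j x) = if i = j then 1 else 0)
    (f : ℝ → ℝ) (hf : Measurable f) (M₁ : ℝ) (hM₁ : 0 < M₁)
    (hfbd : ∀ x ∈ Set.Icc (0:ℝ) 1, M₁⁻¹ ≤ f x ∧ f x ≤ M₁)
    (γ D : ℝ)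
    (hγ : γ = (eLpNorm (projResidual ψ f) ⊤ (volume.restrict (Set.Icc (0:ℝ) 1))).toReal)
    (hγfin : MemLp (projResidual ψ f) ⊤ (volume.restrict (Set.Icc (0:ℝ) 1)))
    (hD : D = Real.sqrt (∫ x in Set.Icc (0:ℝ) 1, (projResidual ψ f x)^2)) :
    ∃ θs : Fin m → ℝ,
      (∀ i, (∫ x in Set.Icc (0:ℝ) 1, expFam ψ θs x * ψ i x)
          = ∫ x in Set.Icc (0:ℝ) 1, f x * ψ i x) ∧
      KLdiv f (expFam ψ θs) ≤ (M₁ / 2) * Real.exp γ * D^2 := by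
  set μ : Measure ℝ := volume.restrict (Set.Icc 0 1)
  have hψ (i : Fin m) : MemLp (ψ i) ∞ μ :=
    have ⟨C, hC⟩ := hψbdd i
    memLp_top_of_bound (hψmeas i).aestronglyMeasurable C (ae_of_all _ hC)
  have hfb : ∀ᵐ x ∂μ, M₁⁻¹ ≤ f x ∧ f x ≤ M₁ := ae_restrict_of_forall_mem measurableSet_Icc hfbd
  obtain ⟨θs, hmin⟩ := (continuous_iff_continuousAt.2 fun θ =>
    (hasFDerivAt_expFamObjective hψ _ θ).continuousAt).exists_forall_le
    (tendsto_expFamObjective_cocompact hψ horth hf.aestronglyMeasurable hM₁ hfb)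
  have hmom := integral_exp_sum_mul_mul_eq_of_forall_le hψ hmin
  refine ⟨θs, hmom, ?_⟩
  have hres : ∀ᵐ x ∂μ, |projResidual ψ f x| ≤ γ := by
    rw [hγ, toReal_eLpNorm hγfin.1]
    simpa using ae_le_lpNorm_exponent_top hγfin
  calc KLdiv f (expFam ψ θs)
      ≤ ∫ x, klIntegrand (f x) (exp (∑ i, (∫ t, log (f t) * ψ i t ∂μ) * ψ i x)) ∂μ :=
        integral_klIntegrand_le_of_moments_eq hψ hf.aestronglyMeasurable hM₁ hfb hmom _
    _ ≤ M₁ / 2 * exp γ * ∫ x, projResidual ψ f x ^ 2 ∂μ :=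
        integral_klIntegrand_exp_le hf.aemeasurable
          (Finset.aemeasurable_fun_sum _ fun i _ => (hψmeas i).aemeasurable.const_mul _)
          (hfb.mono fun x hx => ⟨(inv_pos.2 hM₁).trans_le hx.1, hx.2⟩) hres
    _ = M₁ / 2 * exp γ * D ^ 2 := by
        rw [hD, sq_sqrt (integral_nonneg fun x => sq_nonneg _)]

/-- existence of the information projection and bound on the
approximation error. -/
theorem stmt_14 {m : ℕ} (ψ : Fin m → ℝ → ℝ)
    (hψmeas : ∀ i, Measurable (ψ i)) (hψbdd : ∀ i, ∃ C, ∀ x, |ψ i x| ≤ C)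
    (horth : ∀ i j, (∫ x in Set.Icc (0:ℝ) 1, ψ i x * ψ j x) = if i = j then 1 else 0)
    (A : ℝ)
    (hA : ∀ c : Fin m → ℝ, supIcc (fun x => ∑ i, c i * ψ i x)
      ≤ A * Real.sqrt (∫ x in Set.Icc (0:ℝ) 1, (∑ i, c i * ψ i x)^2))
    (f : ℝ → ℝ) (hf : Measurable f) (M₁ : ℝ) (hM₁ : 0 < M₁)
    (hfbd : ∀ x ∈ Set.Icc (0:ℝ) 1, M₁⁻¹ ≤ f x ∧ f x ≤ M₁)
    (γ D : ℝ)
    (hγ : γ = (eLpNorm (projResidual ψ f) ⊤ (volume.restrict (Set.Icc (0:ℝ) 1))).toReal)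
    (hγfin : MemLp (projResidual ψ f) ⊤ (volume.restrict (Set.Icc (0:ℝ) 1)))
    (hD : D = Real.sqrt (∫ x in Set.Icc (0:ℝ) 1, (projResidual ψ f x)^2))
    (hε : 2 * M₁^2 * Real.exp (2 * γ + 1) * D * A ≤ 1) :
    ∃ θs : Fin m → ℝ,
      (∀ i, (∫ x in Set.Icc (0:ℝ) 1, expFam ψ θs x * ψ i x)
          = ∫ x in Set.Icc (0:ℝ) 1, f x * ψ i x) ∧
      KLdiv f (expFam ψ θs) ≤ (M₁ / 2) * Real.exp γ * D^2 :=
  stmt_14_general ψ hψmeas hψbdd horth f hf M₁ hM₁ hfbd γ D hγ hγfin hD
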